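/- arXiv:1511.01776 — 5 statements merged into one kernel-verified Lean document; each statement's English description precedes it below -/
import Mathlib

section
/- Let G = (V,E) be a graph with |V| = N vertices and |E| = n edges, and let Y' ∈ ℝ^{n×N} be the transpose incidence matrix of an arbitrary orientation of G (entry Y'_{ij} = 1 if edge i leaves vertex j, -1 if edge i enters vertex j, 0 otherwise). Let (P,Q) be a bipartition of V with p = |P| ≥ 1, q = |Q| ≥ 1, let X' ∈ ℝ^{2×N} be the matrix whose i-th column is (1,0)^T if vertex i ∈ P and (0,1)^T if i ∈ Q, and let A' ∈ ℝ^{n×2} be the minimizer of ‖Y' − A X'‖_F² over A. Then ‖Y' − A' X'‖_F² = 2|E| − |V|·|E(P,Q)|/(p·q), where E(P,Q) is the set of edges between P and Q. -/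
open Finset

set_option maxHeartbeats 800000

/-- Claim 1 computation: for the transpose incidence matrix `Y'` of an oriented
simple graph, a bipartition `(P, Pᶜ)` encoded by `X'`, and `A'` minimizing
`‖Y' - A X'‖_F²`, the optimal value is `2|E| - |V|·|E(P,Q)|/(p·q)`. -/
theorem stmt_0 (n N : ℕ) (src tgt : Fin n → Fin N)
    (hloop : ∀ e, src e ≠ tgt e)
    (hsimple : ∀ e e', e ≠ e' →
      ¬(src e = src e' ∧ tgt e = tgt e') ∧ ¬(src e = tgt e' ∧ tgt e = src e'))
    (Y' : Matrix (Fin n) (Fin N) ℝ)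
    (hY' : ∀ e v, Y' e v = if src e = v then 1 else if tgt e = v then -1 else 0)
    (P : Finset (Fin N)) (hP : P.Nonempty) (hQ : Pᶜ.Nonempty)
    (X' : Matrix (Fin 2) (Fin N) ℝ)
    (hX' : ∀ v, (v ∈ P → X' 0 v = 1 ∧ X' 1 v = 0) ∧ (v ∉ P → X' 0 v = 0 ∧ X' 1 v = 1))
    (A' : Matrix (Fin n) (Fin 2) ℝ)
    (hA' : ∀ A : Matrix (Fin n) (Fin 2) ℝ,
      ∑ e, ∑ v, (Y' - A' * X') e v ^ 2 ≤ ∑ e, ∑ v, (Y' - A * X') e v ^ 2) :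
    ∑ e, ∑ v, (Y' - A' * X') e v ^ 2
      = 2 * n - (N : ℝ) *
          ((univ.filter (fun e : Fin n => ¬(src e ∈ P ↔ tgt e ∈ P))).card : ℝ)
          / ((P.card : ℝ) * (Pᶜ.card : ℝ)) := by
  classical
  set p : ℝ := (P.card : ℝ) with hp_def
  set q : ℝ := ((Pᶜ : Finset (Fin N)).card : ℝ) with hq_def
  have hp : 0 < p := by
    have := Finset.card_pos.mpr hP
    rw [hp_def]; exact_mod_cast this
  have hq : 0 < q := by
    have := Finset.card_pos.mpr hQ
    rw [hq_def]; exact_mod_cast this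
  have hpq : p + q = (N : ℝ) := by
    have := Finset.card_add_card_compl P
    rw [Fintype.card_fin] at this
    rw [hp_def, hq_def]
    exact_mod_cast this
  set S : Fin n → ℝ :=
    fun e => (if src e ∈ P then (1:ℝ) else 0) - (if tgt e ∈ P then 1 else 0) with hS
  -- sum of a row of Y' over any finset
  have hrow : ∀ e v, Y' e v =
      (if src e = v then (1:ℝ) else 0) - (if tgt e = v then -1 else 0) * (-1) := by
    intro e v
    rw [hY' e v]
    rcases eq_or_ne (src e) v with h | h <;> rcases eq_or_ne (tgt e) v with h' | h'
    · exact absurd (h.trans h'.symm) (hloop e)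
    all_goals simp [h, h']
  have hsum : ∀ (e : Fin n) (T : Finset (Fin N)),
      ∑ v ∈ T, Y' e v =
        (if src e ∈ T then (1:ℝ) else 0) - (if tgt e ∈ T then 1 else 0) := by
    intro e T
    have h1 : ∀ v ∈ T, Y' e v =
        (if src e = v then (1:ℝ) else 0) - (if tgt e = v then (1:ℝ) else 0) := by
      intro v _
      rw [hY' e v]
      rcases eq_or_ne (src e) v with h | h <;> rcases eq_or_ne (tgt e) v with h' | h'
      · exact absurd (h.trans h'.symm) (hloop e)
      all_goals simp [h, h']
    rw [Finset.sum_congr rfl h1, Finset.sum_sub_distrib,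
      Finset.sum_ite_eq T (src e) (fun _ => (1:ℝ)),
      Finset.sum_ite_eq T (tgt e) (fun _ => (1:ℝ))]
  have hsumsq : ∀ (e : Fin n) (T : Finset (Fin N)),
      ∑ v ∈ T, Y' e v ^ 2 =
        (if src e ∈ T then (1:ℝ) else 0) + (if tgt e ∈ T then 1 else 0) := by
    intro e T
    have h1 : ∀ v ∈ T, Y' e v ^ 2 =
        (if src e = v then (1:ℝ) else 0) + (if tgt e = v then (1:ℝ) else 0) := by
      intro v _
      rw [hY' e v]
      rcases eq_or_ne (src e) v with h | h <;> rcases eq_or_ne (tgt e) v with h' | h'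
      · exact absurd (h.trans h'.symm) (hloop e)
      all_goals simp [h, h']; try ring
    rw [Finset.sum_congr rfl h1, Finset.sum_add_distrib,
      Finset.sum_ite_eq T (src e) (fun _ => (1:ℝ)),
      Finset.sum_ite_eq T (tgt e) (fun _ => (1:ℝ))]
  -- generic expansion of ∑_{v∈T}(Y' e v - c)^2
  have hexp : ∀ (e : Fin n) (T : Finset (Fin N)) (c : ℝ),
      ∑ v ∈ T, (Y' e v - c) ^ 2 =
        (∑ v ∈ T, Y' e v ^ 2) - 2 * c * (∑ v ∈ T, Y' e v) + T.card * c ^ 2 := by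
    intro e T c
    have h1 : ∀ v ∈ T, (Y' e v - c) ^ 2 = Y' e v ^ 2 - 2 * c * Y' e v + c ^ 2 := by
      intro v _; ring
    rw [Finset.sum_congr rfl h1, Finset.sum_add_distrib, Finset.sum_sub_distrib,
      Finset.mul_sum, Finset.sum_const, nsmul_eq_mul]
  -- columns of A * X'
  have hcol : ∀ (A : Matrix (Fin n) (Fin 2) ℝ) (e : Fin n) (v : Fin N),
      (A * X') e v = if v ∈ P then A e 0 else A e 1 := by
    intro A e v
    rw [Matrix.mul_apply, Fin.sum_univ_two]
    by_cases hv : v ∈ P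
    · rcases (hX' v).1 hv with ⟨h0, h1⟩
      simp [hv, h0, h1]
    · rcases (hX' v).2 hv with ⟨h0, h1⟩
      simp [hv, h0, h1]
  -- objective per edge as two sums
  have hsplit : ∀ (A : Matrix (Fin n) (Fin 2) ℝ) (e : Fin n),
      ∑ v, (Y' - A * X') e v ^ 2 =
        ∑ v ∈ P, (Y' e v - A e 0) ^ 2 + ∑ v ∈ Pᶜ, (Y' e v - A e 1) ^ 2 := by
    intro A e
    rw [← Finset.sum_add_sum_compl P]
    congr 1
    · refine Finset.sum_congr rfl fun v hv => ?_
      simp [Matrix.sub_apply, hcol A e v, hv]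
    · refine Finset.sum_congr rfl fun v hv => ?_
      rw [Finset.mem_compl] at hv
      simp [Matrix.sub_apply, hcol A e v, hv]
  -- key per-edge identity
  have key : ∀ (e : Fin n) (a b : ℝ),
      ∑ v ∈ P, (Y' e v - a) ^ 2 + ∑ v ∈ Pᶜ, (Y' e v - b) ^ 2 =
        2 - S e ^ 2 * (N : ℝ) / (p * q)
          + p * (a - S e / p) ^ 2 + q * (b + S e / q) ^ 2 := by
    intro e a b
    rw [hexp e P a, hexp e Pᶜ b, hsum e P, hsum e Pᶜ, hsumsq e P, hsumsq e Pᶜ]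
    rw [← hp_def, ← hq_def, ← hpq]
    simp only [Finset.mem_compl, hS]
    by_cases hs : src e ∈ P <;> by_cases ht : tgt e ∈ P <;>
      simp only [hs, ht, if_true, if_false, not_true, not_false_iff] <;>
      field_simp <;> ring
  -- the optimal matrix
  set Aopt : Matrix (Fin n) (Fin 2) ℝ :=
    Matrix.of (fun e i => if i = 0 then S e / p else -(S e / q)) with hAopt
  have hAopt0 : ∀ e, Aopt e 0 = S e / p := fun e => rfl
  have hAopt1 : ∀ e, Aopt e 1 = -(S e / q) := fun e => rfl
  have hoptval : ∑ e, ∑ v, (Y' - Aopt * X') e v ^ 2 =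
      ∑ e, (2 - S e ^ 2 * (N : ℝ) / (p * q)) := by
    refine Finset.sum_congr rfl fun e _ => ?_
    rw [hsplit Aopt e, key e _ _, hAopt0, hAopt1]
    ring
  have hge : ∑ e, ∑ v, (Y' - Aopt * X') e v ^ 2 ≤
      ∑ e, ∑ v, (Y' - A' * X') e v ^ 2 := by
    rw [hoptval]
    refine Finset.sum_le_sum fun e _ => ?_
    rw [hsplit A' e, key e _ _]
    have h1 : 0 ≤ p * (A' e 0 - S e / p) ^ 2 + q * (A' e 1 + S e / q) ^ 2 := by positivity
    linarith
  have heq : ∑ e, ∑ v, (Y' - A' * X') e v ^ 2 =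
      ∑ e, (2 - S e ^ 2 * (N : ℝ) / (p * q)) := by
    rw [← hoptval]
    exact le_antisymm (hA' Aopt) hge
  rw [heq]
  -- compute the sum of S e ^ 2
  have hS2 : ∀ e, S e ^ 2 = if ¬(src e ∈ P ↔ tgt e ∈ P) then (1:ℝ) else 0 := by
    intro e
    simp only [hS]
    by_cases hs : src e ∈ P <;> by_cases ht : tgt e ∈ P <;>
      simp [hs, ht] <;> ring
  have hsumS2 : ∑ e, S e ^ 2 =
      ((univ.filter (fun e : Fin n => ¬(src e ∈ P ↔ tgt e ∈ P))).card : ℝ) := by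
    rw [Finset.sum_congr rfl fun e _ => hS2 e]
    rw [Finset.sum_boole]
  rw [Finset.sum_sub_distrib, Finset.sum_const, Finset.card_univ, Fintype.card_fin,
    nsmul_eq_mul, ← Finset.sum_div, ← Finset.sum_mul, hsumS2]
  ring
end

section
/- Let Y ∈ ℝ^{(n+1)×N} be a matrix whose first row is constantly M > 0 and let (A*, X*) minimize ‖Y − A X‖_F² over A ∈ ℝ^{(n+1)×2} and X ∈ ℝ^{2×N} with each column of X having at most one nonzero entry. If ‖Y − A* X*‖_F² ≤ Σᵢ ‖(Y without first row) columns‖² (i.e., the optimum is at most the value attained by representing the first row exactly), then every nonzero entry of the normalized X* (with a₁₁* = a₁₂* = M) satisfies M²(1 − x*₁ᵢ − x*₂ᵢ)² ≤ ‖Y'‖_F², and hence |1 − x*₁ᵢ − x*₂ᵢ| ≤ ‖Y'‖_F / M for every column i, where Y' is Y with its first row removed. -/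
open Finset

/-- In the reduction of Theorem 1: if `Y` has constant first row `M`, `(A*, X*)`
minimizes `‖Y - A X‖_F²` over column-1-sparse `X` and is normalized so that the
first row of `A*` is `(M, M)`, and the optimum is at most `‖Y'‖_F²`, then every
column `i` satisfies `M²(1 - x*₁ᵢ - x*₂ᵢ)² ≤ ‖Y'‖_F²` and
`|1 - x*₁ᵢ - x*₂ᵢ| ≤ ‖Y'‖_F / M`, where `Y'` is `Y` without its first row. -/
theorem stmt_3 (n N : ℕ) (M : ℝ) (hM : 0 < M)
    (Y : Matrix (Fin (n + 1)) (Fin N) ℝ)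
    (hrow : ∀ i, Y 0 i = M)
    (Astar : Matrix (Fin (n + 1)) (Fin 2) ℝ) (Xstar : Matrix (Fin 2) (Fin N) ℝ)
    (hAnorm : Astar 0 0 = M ∧ Astar 0 1 = M)
    (hXsparse : ∀ i : Fin N, Xstar 0 i = 0 ∨ Xstar 1 i = 0)
    (hmin : ∀ (A : Matrix (Fin (n + 1)) (Fin 2) ℝ) (X : Matrix (Fin 2) (Fin N) ℝ),
      (∀ i : Fin N, X 0 i = 0 ∨ X 1 i = 0) →
      ∑ j, ∑ i, (Y - Astar * Xstar) j i ^ 2 ≤ ∑ j, ∑ i, (Y - A * X) j i ^ 2)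
    (hopt : ∑ j, ∑ i, (Y - Astar * Xstar) j i ^ 2
        ≤ ∑ j : Fin n, ∑ i, (Y.submatrix Fin.succ id) j i ^ 2) :
    ∀ i : Fin N,
      M ^ 2 * (1 - Xstar 0 i - Xstar 1 i) ^ 2
          ≤ ∑ j : Fin n, ∑ i', (Y.submatrix Fin.succ id) j i' ^ 2 ∧
      |1 - Xstar 0 i - Xstar 1 i|
          ≤ Real.sqrt (∑ j : Fin n, ∑ i', (Y.submatrix Fin.succ id) j i' ^ 2) / M := by

  intro i
  set B := ∑ j : Fin n, ∑ i', (Y.submatrix Fin.succ id) j i' ^ 2 with hB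
  have key : M ^ 2 * (1 - Xstar 0 i - Xstar 1 i) ^ 2 ≤ B := by
    have h0 : (Y - Astar * Xstar) 0 i = M * (1 - Xstar 0 i - Xstar 1 i) := by
      simp [Matrix.sub_apply, Matrix.mul_apply, Fin.sum_univ_two, hrow i,
        hAnorm.1, hAnorm.2]
      ring
    have h1 : ((Y - Astar * Xstar) 0 i) ^ 2 ≤ ∑ i', ((Y - Astar * Xstar) 0 i') ^ 2 :=
      Finset.single_le_sum (f := fun i' => ((Y - Astar * Xstar) 0 i') ^ 2)
        (fun _ _ => sq_nonneg _) (Finset.mem_univ i)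
    have h2 : (∑ i', ((Y - Astar * Xstar) 0 i') ^ 2)
        ≤ ∑ j, ∑ i', ((Y - Astar * Xstar) j i') ^ 2 :=
      Finset.single_le_sum (f := fun j => ∑ i', ((Y - Astar * Xstar) j i') ^ 2)
        (fun _ _ => Finset.sum_nonneg fun _ _ => sq_nonneg _) (Finset.mem_univ 0)
    calc M ^ 2 * (1 - Xstar 0 i - Xstar 1 i) ^ 2
        = ((Y - Astar * Xstar) 0 i) ^ 2 := by rw [h0]; ring
      _ ≤ ∑ j, ∑ i', ((Y - Astar * Xstar) j i') ^ 2 := h1.trans h2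
      _ ≤ B := hopt
  refine ⟨key, ?_⟩
  rw [le_div_iff₀ hM]
  have : |1 - Xstar 0 i - Xstar 1 i| * M
      = Real.sqrt (M ^ 2 * (1 - Xstar 0 i - Xstar 1 i) ^ 2) := by
    rw [Real.sqrt_mul (sq_nonneg M), Real.sqrt_sq_eq_abs, Real.sqrt_sq_eq_abs,
      abs_of_pos hM, mul_comm]
  rw [this]
  exact Real.sqrt_le_sqrt key
end

section
/- Let a ∈ ℝⁿ and θ > 0, and consider the projection of a onto the set S = {x ∈ ℝⁿ : x ≥ 0, Σᵢ xᵢ ≤ θ}. If Σᵢ max(aᵢ,0) ≤ θ then P_S(a) = [a]₊; otherwise P_S(a) = [a − ρ𝟙]₊ for the unique ρ > 0 satisfying Σᵢ max(aᵢ − ρ, 0) = θ. -/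
open Finset

private lemma aux_sq (n : ℕ) (a x z : Fin n → ℝ)
    (key : ∑ i, (a i - x i) * (z i - x i) ≤ 0) :
    ∑ i, (x i - a i) ^ 2 ≤ ∑ i, (z i - a i) ^ 2 := by
  have e : ∑ i, (x i - a i) ^ 2
      = ∑ i, (z i - a i) ^ 2 - ∑ i, (z i - x i) ^ 2
        + 2 * ∑ i, (a i - x i) * (z i - x i) := by
    rw [Finset.mul_sum, ← Finset.sum_sub_distrib, ← Finset.sum_add_distrib]
    apply Finset.sum_congr rfl
    intro i _; ring
  have hsq : (0:ℝ) ≤ ∑ i, (z i - x i) ^ 2 :=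
    Finset.sum_nonneg fun i _ => sq_nonneg _
  linarith

private lemma aux_opt (n : ℕ) (a : Fin n → ℝ) (θ ρ : ℝ) (hρ : 0 < ρ)
    (hsum : (∑ i, max (a i - ρ) 0) = θ)
    (z : Fin n → ℝ) (hz : ∀ i, 0 ≤ z i) (hzs : (∑ i, z i) ≤ θ) :
    ∑ i, (max (a i - ρ) 0 - a i) ^ 2 ≤ ∑ i, (z i - a i) ^ 2 := by
  apply aux_sq n a (fun i => max (a i - ρ) 0) z
  have h1 : ∑ i, (a i - max (a i - ρ) 0) * (z i - max (a i - ρ) 0)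
      ≤ ∑ i, ρ * (z i - max (a i - ρ) 0) := by
    apply Finset.sum_le_sum
    intro i _
    rcases le_or_gt (a i - ρ) 0 with h | h
    · rw [max_eq_right h]
      have := hz i
      nlinarith
    · rw [max_eq_left h.le]
      nlinarith
  have h2 : ∑ i, ρ * (z i - max (a i - ρ) 0) = ρ * ((∑ i, z i) - θ) := by
    rw [← Finset.mul_sum, Finset.sum_sub_distrib, hsum]
  have h3 : ρ * ((∑ i, z i) - θ) ≤ 0 :=
    mul_nonpos_of_nonneg_of_nonpos hρ.le (by linarith)
  linarith

/-- Projection onto `S = {x ≥ 0, ∑ᵢ xᵢ ≤ θ}`: if `∑ᵢ max(aᵢ,0) ≤ θ` the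
projection is `[a]₊`; otherwise it is `[a - ρ𝟙]₊` for the unique `ρ > 0` with
`∑ᵢ max(aᵢ - ρ, 0) = θ`. -/
theorem stmt_12 (n : ℕ) (a : Fin n → ℝ) (θ : ℝ) (hθ : 0 < θ) :
    ((∑ i, max (a i) 0) ≤ θ →
      ((∀ i, 0 ≤ max (a i) 0) ∧ (∑ i, max (a i) 0) ≤ θ ∧
        ∀ z : Fin n → ℝ, (∀ i, 0 ≤ z i) → (∑ i, z i) ≤ θ →
          ∑ i, (max (a i) 0 - a i) ^ 2 ≤ ∑ i, (z i - a i) ^ 2)) ∧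
    (θ < ∑ i, max (a i) 0 →
      (∃! ρ : ℝ, 0 < ρ ∧ (∑ i, max (a i - ρ) 0) = θ) ∧
      ∀ ρ : ℝ, 0 < ρ → (∑ i, max (a i - ρ) 0) = θ →
        (∀ i, 0 ≤ max (a i - ρ) 0) ∧ (∑ i, max (a i - ρ) 0) ≤ θ ∧
        ∀ z : Fin n → ℝ, (∀ i, 0 ≤ z i) → (∑ i, z i) ≤ θ →
          ∑ i, (max (a i - ρ) 0 - a i) ^ 2 ≤ ∑ i, (z i - a i) ^ 2) := by
  constructor
  · intro hle
    refine ⟨fun i => le_max_right _ _, hle, ?_⟩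
    intro z hz hzs
    apply Finset.sum_le_sum
    intro i _
    rcases le_or_gt (a i) 0 with h | h
    · rw [max_eq_right h]
      have := hz i
      nlinarith
    · rw [max_eq_left h.le]
      nlinarith [sq_nonneg (z i - a i)]
  · intro hgt
    set f : ℝ → ℝ := fun ρ => ∑ i, max (a i - ρ) 0 with hf
    have hmono : ∀ ρ₁ ρ₂ : ℝ, ρ₁ < ρ₂ → (∃ i, ρ₁ < a i) → f ρ₂ < f ρ₁ := by
      intro ρ₁ ρ₂ h12 ⟨i, hi⟩
      apply Finset.sum_lt_sum
      · intro j _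
        exact max_le_max (by linarith) le_rfl
      · refine ⟨i, Finset.mem_univ i, ?_⟩
        rw [max_eq_left (by linarith : (0:ℝ) ≤ a i - ρ₁)]
        exact max_lt (by linarith) (by linarith)
    have hpos_idx : ∀ ρ : ℝ, f ρ = θ → ∃ i, ρ < a i := by
      intro ρ hρθ
      by_contra hc
      push_neg at hc
      have : f ρ = 0 := by
        apply Finset.sum_eq_zero
        intro i _
        exact max_eq_right (by linarith [hc i])
      linarith
    have hcont : Continuous f := by
      apply continuous_finset_sum
      intro i _
      exact (continuous_const.sub continuous_id).max continuous_const
    set M : ℝ := θ + ∑ i, |a i| with hM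
    have habs : ∀ i, a i ≤ M := by
      intro i
      have h1 : |a i| ≤ ∑ j, |a j| :=
        Finset.single_le_sum (f := fun j => |a j|)
          (fun j _ => abs_nonneg _) (Finset.mem_univ i)
      calc a i ≤ |a i| := le_abs_self _
        _ ≤ ∑ j, |a j| := h1
        _ ≤ M := by rw [hM]; linarith
    have hfM : f M = 0 := by
      apply Finset.sum_eq_zero
      intro i _
      exact max_eq_right (by linarith [habs i])
    have hf0 : θ < f 0 := by
      show θ < ∑ i, max (a i - 0) 0
      simpa using hgt
    have h0M : (0:ℝ) ≤ M := by
      have h2 : (0:ℝ) ≤ ∑ i, |a i| :=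
        Finset.sum_nonneg fun i _ => abs_nonneg _
      rw [hM]; linarith
    have hiv : θ ∈ f '' Set.Icc 0 M := by
      apply intermediate_value_Icc' h0M hcont.continuousOn
      exact ⟨by rw [hfM]; exact hθ.le, hf0.le⟩
    obtain ⟨ρ₀, hρ₀mem, hρ₀⟩ := hiv
    have hρ₀pos : 0 < ρ₀ := by
      rcases lt_or_eq_of_le hρ₀mem.1 with h | h
      · exact h
      · exfalso; rw [← h] at hρ₀; linarith
    refine ⟨⟨ρ₀, ⟨hρ₀pos, hρ₀⟩, ?_⟩, ?_⟩
    · rintro ρ' ⟨hρ'pos, hρ'⟩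
      have hρ'f : f ρ' = θ := hρ'
      by_contra hne
      rcases lt_or_gt_of_ne hne with h | h
      · have := hmono ρ' ρ₀ h (hpos_idx ρ' hρ'f)
        rw [hρ₀, hρ'f] at this; exact lt_irrefl θ this
      · have := hmono ρ₀ ρ' h (hpos_idx ρ₀ hρ₀)
        rw [hρ₀, hρ'f] at this; exact lt_irrefl θ this
    · intro ρ hρpos hρsum
      exact ⟨fun i => le_max_right _ _, le_of_eq hρsum,
        aux_opt n a θ ρ hρpos hρsum⟩
end

section
/- In the successive convex approximation method (Algorithm 4) applied to min_x h₀(x) subject to hᵢ(x) ≤ 0, with approximation functions h̃ᵢ(x,y) that are upper bounds (h̃ᵢ(x,y) ≥ hᵢ(x) for all x,y) and consistent at the base point (h̃ᵢ(x,x) = hᵢ(x)), every iterate x^r is feasible for the original problem, and the objective sequence h₀(x^r) is nonincreasing when h̃₀(·, x^r) is convex and the stepsize γ ∈ (0,1] is used: h₀(x^{r+1}) ≤ γ h̃₀(x̂^r, x^r) + (1−γ) h₀(x^r) ≤ h₀(x^r). -/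
/-- Successive convex approximation (Algorithm 4): with upper-bounding,
consistent, convex surrogates, every iterate is feasible for the original
problem and the objective sequence is nonincreasing:
`h₀(x^{r+1}) ≤ γ h̃₀(x̂^r, x^r) + (1-γ) h₀(x^r) ≤ h₀(x^r)`. -/
theorem stmt_15 (n m : ℕ)
    (h0 : (Fin n → ℝ) → ℝ) (h : Fin m → (Fin n → ℝ) → ℝ)
    (th0 : (Fin n → ℝ) → (Fin n → ℝ) → ℝ)
    (th : Fin m → (Fin n → ℝ) → (Fin n → ℝ) → ℝ)
    (hub0 : ∀ x y, h0 x ≤ th0 x y)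
    (hcons0 : ∀ x, th0 x x = h0 x)
    (hub : ∀ i x y, h i x ≤ th i x y)
    (hcons : ∀ i x, th i x x = h i x)
    (hconv0 : ∀ y, ConvexOn ℝ Set.univ (fun x => th0 x y))
    (hconv : ∀ i y, ConvexOn ℝ Set.univ (fun x => th i x y))
    (γ : ℝ) (hγ : γ ∈ Set.Ioc (0 : ℝ) 1)
    (x xhat : ℕ → Fin n → ℝ)
    (hfeas0 : ∀ i, h i (x 0) ≤ 0)
    (hhatfeas : ∀ r i, th i (xhat r) (x r) ≤ 0)
    (hhatmin : ∀ r z, (∀ i, th i z (x r) ≤ 0) → th0 (xhat r) (x r) ≤ th0 z (x r))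
    (hupd : ∀ r, x (r + 1) = γ • xhat r + (1 - γ) • x r) :
    (∀ r i, h i (x r) ≤ 0) ∧
    (∀ r, h0 (x (r + 1)) ≤ γ * th0 (xhat r) (x r) + (1 - γ) * h0 (x r) ∧
      γ * th0 (xhat r) (x r) + (1 - γ) * h0 (x r) ≤ h0 (x r)) := by
  obtain ⟨hγ0, hγ1⟩ := hγ
  have hfeas : ∀ r i, h i (x r) ≤ 0 := by
    intro r
    induction r with
    | zero => exact hfeas0
    | succ r ih =>
      intro i
      have hcv : th i (γ • xhat r + (1 - γ) • x r) (x r) ≤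
          γ • th i (xhat r) (x r) + (1 - γ) • th i (x r) (x r) :=
        (hconv i (x r)).2 (Set.mem_univ (xhat r)) (Set.mem_univ (x r))
          hγ0.le (by linarith) (by ring)
      calc h i (x (r + 1)) ≤ th i (x (r + 1)) (x r) := hub i _ _
        _ ≤ γ * th i (xhat r) (x r) + (1 - γ) * th i (x r) (x r) := by
            rw [hupd r]; simpa [smul_eq_mul] using hcv
        _ ≤ 0 := by
            have h1 := hhatfeas r i
            have h2 : th i (x r) (x r) ≤ 0 := by rw [hcons]; exact ih i
            nlinarith
  refine ⟨hfeas, fun r => ?_⟩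
  have hcv : th0 (γ • xhat r + (1 - γ) • x r) (x r) ≤
      γ • th0 (xhat r) (x r) + (1 - γ) • th0 (x r) (x r) :=
    (hconv0 (x r)).2 (Set.mem_univ (xhat r)) (Set.mem_univ (x r))
      hγ0.le (by linarith) (by ring)
  have hmin : th0 (xhat r) (x r) ≤ h0 (x r) := by
    have := hhatmin r (x r) (fun i => by rw [hcons]; exact hfeas r i)
    rwa [hcons0] at this
  constructor
  · calc h0 (x (r + 1)) ≤ th0 (x (r + 1)) (x r) := hub0 _ _
      _ ≤ γ * th0 (xhat r) (x r) + (1 - γ) * th0 (x r) (x r) := by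
          rw [hupd r]; simpa [smul_eq_mul] using hcv
      _ = γ * th0 (xhat r) (x r) + (1 - γ) * h0 (x r) := by rw [hcons0]
  · nlinarith
end

section
/- Let h̃: ℝⁿ × ℝⁿ → ℝ satisfy: h̃(x,y) = f̃(x,y) + g(x) with f̃(·,y) differentiable, g convex, f̃(x,x) = f(x), ∇₁f̃(x,x) = ∇f(x), and f̃(x,y) ≥ f(x) for all x,y. If x̄ minimizes h̃(·, x̄) over a convex set C, then x̄ satisfies the first-order stationarity condition of min_{x∈C} f(x) + g(x): 0 ∈ ∇f(x̄) + ∂g(x̄) + N_C(x̄), where N_C(x̄) is the normal cone of C at x̄. -/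
/-!
Along the segment from `x̄` to `z ∈ C`, convexity bounds `g` by its chord, so minimality of
`f̃(·, x̄) + g` at `x̄` differentiated at `x̄` gives, by gradient consistency, the variational
inequality `g x̄ - g z ≤ ⟪∇f x̄, z - x̄⟫` on `C`. Thus `x̄` minimizes the continuous convex function
`g + ⟪∇f x̄, ·⟫` over `C`, and a Hahn–Banach separation of its strict epigraph from
`C × (-∞, value at x̄]` yields a subgradient whose negative is normal to `C` at `x̄`.
-/

open scoped RealInnerProductSpace
open Filter Set Topology

section Separation

variable {E : Type*} [TopologicalSpace E] [AddCommGroup E] [Module ℝ E]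
  [IsTopologicalAddGroup E] [ContinuousSMul ℝ E]

/-- The functional separating the open strict epigraph of `h` from `C ×ˢ Iic (h x)` is
non-vertical, as it separates `(x, h x + 1)` from `(x, h x)`; normalized, it is the subgradient. -/
theorem ConvexOn.exists_subgradient_of_isMinOn {h : E → ℝ} {C : Set E} {x : E}
    (hh : ConvexOn ℝ univ h) (hcont : Continuous h) (hC : Convex ℝ C) (hx : x ∈ C)
    (hmin : IsMinOn h C x) :
    ∃ ℓ : StrongDual ℝ E, (∀ z, h x + ℓ (z - x) ≤ h z) ∧ ∀ z ∈ C, 0 ≤ ℓ (z - x) := by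
  have hepi_convex : Convex ℝ {p : E × ℝ | h p.1 < p.2} := by
    simpa using hh.convex_strict_epigraph
  have hepi_open : IsOpen {p : E × ℝ | h p.1 < p.2} :=
    isOpen_lt (hcont.comp continuous_fst) continuous_snd
  have hdisj : Disjoint {p : E × ℝ | h p.1 < p.2} (C ×ˢ Iic (h x)) :=
    disjoint_left.2 fun p hpA hpB => (hpA.trans_le hpB.2).not_ge (isMinOn_iff.1 hmin _ hpB.1)
  obtain ⟨L, c, hA, hB⟩ :=
    geometric_hahn_banach_open hepi_convex hepi_open (hC.prod (convex_Iic _)) hdisj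
  set φ := L.comp (ContinuousLinearMap.inl ℝ E ℝ)
  set s := L (0, 1)
  have hL : ∀ z t, L (z, t) = φ z + t * s := fun z t => by
    rw [show ((z, t) : E × ℝ) = (z, 0) + t • (0, 1) by simp, map_add, map_smul]
    rfl
  have hgraph : ∀ z, L (z, h z) ≤ c := fun z => by
    have hline : Tendsto (fun t => L (z, t)) (𝓝[>] (h z)) (𝓝 (L (z, h z))) :=
      ((L.continuous.comp (Continuous.prodMk_right z)).tendsto _).mono_left nhdsWithin_le_nhds
    exact le_of_tendsto hline (eventually_nhdsWithin_of_forall fun t ht => (hA (z, t) ht).le)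
  have hcx : c ≤ L (x, h x) := hB _ ⟨hx, mem_Iic.2 le_rfl⟩
  have hs : s < 0 := by
    have := hA (x, h x + 1) (lt_add_one (h x))
    rw [hL] at this hcx
    linarith
  refine ⟨(-s)⁻¹ • φ, fun z => ?_, fun z hz => ?_⟩
  · have := (hgraph z).trans hcx
    rw [hL, hL] at this
    rw [smul_apply, map_sub, smul_eq_mul, ← le_sub_iff_add_le',
      inv_mul_le_iff₀ (neg_pos.2 hs)]
    linarith
  · have := (hgraph x).trans (hB (z, h x) ⟨hz, mem_Iic.2 le_rfl⟩)
    rw [hL, hL] at this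
    rw [smul_apply, map_sub, smul_eq_mul]
    exact mul_nonneg (inv_nonneg.2 (neg_nonneg.2 hs.le)) (by linarith)

section FirstOrder

variable {E : Type*} [NormedAddCommGroup E] [NormedSpace ℝ E]

theorem IsMinOn.sub_le_fderiv_of_convexOn_add {φ g : E → ℝ} {φ' : StrongDual ℝ E}
    {C : Set E} {x z : E} (hmin : IsMinOn (fun y => φ y + g y) C x) (hφ : HasFDerivAt φ φ' x)
    (hg : ConvexOn ℝ C g) (hx : x ∈ C) (hz : z ∈ C) : g x - g z ≤ φ' (z - x) := by
  set ψ : ℝ → ℝ := fun t => φ (x + t • (z - x)) + t * (g z - g x)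
  have hψ : HasDerivAt ψ (φ' (z - x) + (g z - g x)) 0 := by
    have hline : HasDerivAt (fun t : ℝ => x + t • (z - x)) (z - x) 0 := by
      simpa using ((hasDerivAt_id (0 : ℝ)).smul_const (z - x)).const_add x
    have := (hφ.comp_hasDerivAt_of_eq 0 hline (by simp)).add
      ((hasDerivAt_id' (0 : ℝ)).mul_const (g z - g x))
    rw [one_mul] at this
    exact this
  have hψmin : IsMinOn ψ (Icc 0 1) 0 := by
    rintro t ⟨ht0, ht1⟩
    have hseg : x + t • (z - x) = (1 - t) • x + t • z := by module
    have hmem : x + t • (z - x) ∈ C := hseg ▸ hg.1 hx hz (by linarith) ht0 (by ring)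
    have hconv : g (x + t • (z - x)) ≤ (1 - t) * g x + t * g z := by
      rw [hseg]; exact hg.2 hx hz (by linarith) ht0 (by ring)
    have := isMinOn_iff.1 hmin _ hmem
    simp only [mem_ofPred_eq, ψ, zero_smul, add_zero, zero_mul]
    linarith
  have hslope := hψmin.localize.hasFDerivWithinAt_nonneg hψ.hasFDerivAt.hasFDerivWithinAt
    (mem_posTangentConeAt_of_segment_subset (y := 1) (by simp [segment_eq_Icc]))
  simp only [ContinuousLinearMap.toSpanSingleton_apply, smul_eq_mul, one_mul] at hslope
  linarith

end FirstOrder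

theorem exists_subgradient_normal_of_forall_sub_le_inner {E : Type*} [NormedAddCommGroup E]
    [InnerProductSpace ℝ E] [CompleteSpace E] {g : E → ℝ} {C : Set E} {a x : E}
    (hg : ConvexOn ℝ univ g) (hgc : Continuous g) (hC : Convex ℝ C) (hx : x ∈ C)
    (hvar : ∀ z ∈ C, g x - g z ≤ ⟪a, z - x⟫) :
    ∃ u v : E, (∀ z, g x + ⟪u, z - x⟫ ≤ g z) ∧ (∀ z ∈ C, ⟪v, z - x⟫ ≤ 0) ∧ a + u + v = 0 := by
  obtain ⟨ℓ, hsub, hnormal⟩ := ConvexOn.exists_subgradient_of_isMinOn (h := fun z => g z + ⟪a, z⟫)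
    (hg.add ((innerSL ℝ a).toLinearMap.convexOn convex_univ))
    (hgc.add (continuous_const.inner continuous_id)) hC hx
    (isMinOn_iff.2 fun z hz => by linarith [hvar z hz, inner_sub_right (𝕜 := ℝ) a z x])
  set w := (InnerProductSpace.toDual ℝ E).symm ℓ
  have hw : ∀ y, ⟪w, y⟫ = ℓ y := fun y => InnerProductSpace.toDual_symm_apply
  refine ⟨w - a, -w, fun z => ?_, fun z hz => ?_, by abel⟩
  · rw [inner_sub_left, hw, inner_sub_right]
    linarith [hsub z]
  · rw [inner_neg_left, hw]
    linarith [hnormal z hz]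

theorem stmt_16_general (n : ℕ) (C : Set (EuclideanSpace ℝ (Fin n))) (hC : Convex ℝ C)
    (f' : EuclideanSpace ℝ (Fin n) → EuclideanSpace ℝ (Fin n))
    (g : EuclideanSpace ℝ (Fin n) → ℝ) (hg : ConvexOn ℝ Set.univ g)
    (ftilde : EuclideanSpace ℝ (Fin n) → EuclideanSpace ℝ (Fin n) → ℝ)
    (ftilde' : EuclideanSpace ℝ (Fin n) → EuclideanSpace ℝ (Fin n) → EuclideanSpace ℝ (Fin n))
    (hftdiff : ∀ y x, HasGradientAt (fun z => ftilde z y) (ftilde' x y) x)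
    (hgradcons : ∀ x, ftilde' x x = f' x)
    (xbar : EuclideanSpace ℝ (Fin n)) (hxbar : xbar ∈ C)
    (hmin : ∀ z ∈ C, ftilde xbar xbar + g xbar ≤ ftilde z xbar + g z) :
    ∃ u v : EuclideanSpace ℝ (Fin n),
      (∀ z, g xbar + ⟪u, z - xbar⟫ ≤ g z) ∧
      (∀ z ∈ C, ⟪v, z - xbar⟫ ≤ 0) ∧
      f' xbar + u + v = 0 := by
  have hgc : Continuous g := continuousOn_univ.mp (hg.continuousOn isOpen_univ)
  refine exists_subgradient_normal_of_forall_sub_le_inner hg hgc hC hxbar fun z hz => ?_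
  simpa [hgradcons] using (isMinOn_iff.2 hmin).sub_le_fderiv_of_convexOn_add
    (hftdiff xbar xbar).hasFDerivAt (hg.subset (subset_univ C) hC) hxbar hz

/-- Fixed point of the surrogate minimization implies stationarity: if `x̄`
minimizes its own convex surrogate `h̃(·, x̄) = f̃(·, x̄) + g` over a convex set
`C`, where the surrogate is value- and gradient-consistent and upper-bounds
`f`, then `0 ∈ ∇f(x̄) + ∂g(x̄) + N_C(x̄)`. -/
theorem stmt_16 (n : ℕ) (C : Set (EuclideanSpace ℝ (Fin n))) (hC : Convex ℝ C)
    (f : EuclideanSpace ℝ (Fin n) → ℝ)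
    (f' : EuclideanSpace ℝ (Fin n) → EuclideanSpace ℝ (Fin n))
    (hf : ∀ x, HasGradientAt f (f' x) x)
    (g : EuclideanSpace ℝ (Fin n) → ℝ) (hg : ConvexOn ℝ Set.univ g)
    (ftilde : EuclideanSpace ℝ (Fin n) → EuclideanSpace ℝ (Fin n) → ℝ)
    (ftilde' : EuclideanSpace ℝ (Fin n) → EuclideanSpace ℝ (Fin n) → EuclideanSpace ℝ (Fin n))
    (hftdiff : ∀ y x, HasGradientAt (fun z => ftilde z y) (ftilde' x y) x)
    (hval : ∀ x, ftilde x x = f x)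
    (hgradcons : ∀ x, ftilde' x x = f' x)
    (hub : ∀ x y, f x ≤ ftilde x y)
    (xbar : EuclideanSpace ℝ (Fin n)) (hxbar : xbar ∈ C)
    (hmin : ∀ z ∈ C, ftilde xbar xbar + g xbar ≤ ftilde z xbar + g z) :
    ∃ u v : EuclideanSpace ℝ (Fin n),
      (∀ z, g xbar + ⟪u, z - xbar⟫ ≤ g z) ∧
      (∀ z ∈ C, ⟪v, z - xbar⟫ ≤ 0) ∧
      f' xbar + u + v = 0 :=
  stmt_16_general n C hC f' g hg ftilde ftilde' hftdiff hgradcons xbar hxbar hmin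
end Separation
end
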